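/- arXiv:1901.06979 — 5 statements merged into one kernel-verified Lean document; each statement's English description precedes it below -/
import Mathlib

section
/- Let J be an absolutely one-homogeneous convex lower semicontinuous functional on a real Hilbert space H, with null-space N(J) = {u ∈ H : J(u) = 0}. Then N(J) is a linear subspace of H, and J(u+w) = J(u) for all u ∈ H and w ∈ N(J). -/
/-- The class `𝒞` of convex, lower semicontinuous, absolutely one-homogeneous
functionals `J : H → ℝ ∪ {+∞}` on a real Hilbert space. -/
def IsAbsOneHom {H : Type*} [NormedAddCommGroup H] [InnerProductSpace ℝ H]
    (J : H → EReal) : Prop :=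
  (∀ u v : H, ∀ a b : ℝ, 0 ≤ a → 0 ≤ b → a + b = 1 →
      J (a • u + b • v) ≤ (a : EReal) * J u + (b : EReal) * J v) ∧
  LowerSemicontinuous J ∧
  (∀ c : ℝ, c ≠ 0 → ∀ u : H, J (c • u) = ((|c| : ℝ) : EReal) * J u) ∧
  J 0 = 0

/-- Subdifferential of `J` at `u`:
`∂J(u) = {p ∈ H : ⟨p,v⟩ ≤ J(v) ∀ v, ⟨p,u⟩ = J(u)}`. -/
def subdiff {H : Type*} [NormedAddCommGroup H] [InnerProductSpace ℝ H]
    (J : H → EReal) (u : H) : Set H :=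
  {p : H | (∀ v : H, ((inner ℝ p v : ℝ) : EReal) ≤ J v) ∧ ((inner ℝ p u : ℝ) : EReal) = J u}

/-! Convexity and absolute one-homogeneity make `J` subadditive:
`J (u + v) = 2 J ((u + v) / 2) ≤ J u + J v`. Hence adding an element of the null space can
only decrease `J`, and subtracting it back shows that it does not change `J` at all. -/

namespace IsAbsOneHom

variable {H : Type*} [NormedAddCommGroup H] [InnerProductSpace ℝ H] {J : H → EReal}

lemma map_neg (hJ : IsAbsOneHom J) (u : H) : J (-u) = J u := by
  simpa using hJ.2.2.1 (-1) (by norm_num) u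

lemma map_add_le (hJ : IsAbsOneHom J) (u v : H) : J (u + v) ≤ J u + J v := by
  have hmid := hJ.1 u v (1 / 2) (1 / 2) (by norm_num) (by norm_num) (by norm_num)
  have hdouble := hJ.2.2.1 2 two_ne_zero ((1 / 2 : ℝ) • u + (1 / 2 : ℝ) • v)
  rw [smul_add, smul_smul, smul_smul, abs_two] at hdouble
  norm_num at hdouble
  calc J (u + v) = ((2 : ℝ) : EReal) * J ((1 / 2 : ℝ) • u + (1 / 2 : ℝ) • v) := hdouble
    _ ≤ ((2 : ℝ) : EReal) * (((1 / 2 : ℝ) : EReal) * J u + ((1 / 2 : ℝ) : EReal) * J v) :=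
        mul_le_mul_of_nonneg_left hmid (by norm_num)
    _ = J u + J v := by
        rw [EReal.left_distrib_of_nonneg_of_ne_top (by norm_num) (EReal.coe_ne_top 2),
          ← mul_assoc, ← mul_assoc, ← EReal.coe_mul]
        norm_num

lemma map_add_of_eq_zero (hJ : IsAbsOneHom J) (u : H) {w : H} (hw : J w = 0) :
    J (u + w) = J u := by
  refine le_antisymm ?_ ?_
  · simpa [hw] using hJ.map_add_le u w
  · simpa [hw, hJ.map_neg] using hJ.map_add_le (u + w) (-w)

lemma map_smul_of_eq_zero (hJ : IsAbsOneHom J) (c : ℝ) {u : H} (hu : J u = 0) :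
    J (c • u) = 0 := by
  rcases eq_or_ne c 0 with rfl | hc
  · rw [zero_smul, hJ.2.2.2]
  · rw [hJ.2.2.1 c hc, hu, mul_zero]

end IsAbsOneHom

theorem nullspace_linear_and_invariance_general {H : Type*} [NormedAddCommGroup H]
    [InnerProductSpace ℝ H]
    (J : H → EReal) (hJ : IsAbsOneHom J) :
    J (0 : H) = 0 ∧
    (∀ u v : H, J u = 0 → J v = 0 → J (u + v) = 0) ∧
    (∀ (c : ℝ) (u : H), J u = 0 → J (c • u) = 0) ∧
    (∀ u w : H, J w = 0 → J (u + w) = J u) :=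
  ⟨hJ.2.2.2, fun u _ hu hv => (hJ.map_add_of_eq_zero u hv).trans hu,
    fun c _ hu => hJ.map_smul_of_eq_zero c hu, fun u _ hw => hJ.map_add_of_eq_zero u hw⟩

theorem nullspace_linear_and_invariance {H : Type*} [NormedAddCommGroup H]
    [InnerProductSpace ℝ H] [CompleteSpace H]
    (J : H → EReal) (hJ : IsAbsOneHom J) :
    J (0 : H) = 0 ∧
    (∀ u v : H, J u = 0 → J v = 0 → J (u + v) = 0) ∧
    (∀ (c : ℝ) (u : H), J u = 0 → J (c • u) = 0) ∧
    (∀ u w : H, J w = 0 → J (u + w) = J u) :=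
  nullspace_linear_and_invariance_general J hJ
end

section
/- Let J be an absolutely one-homogeneous convex lsc functional on a real Hilbert space H and let u be an eigenvector with eigenvalue λ ≥ 0, i.e., λu ∈ ∂J(u). Then λu is the unique element of minimal norm in ∂J(u): ‖λu‖ ≤ ‖p‖ for all p ∈ ∂J(u), with equality only for p = λu. -/
/-!
All subgradients at `u` have the same inner product `J u` with `u`. For the subgradient `q = l • u`
this gives `⟪p, q⟫ = l * J u = ‖q‖²` for every `p ∈ ∂J(u)`, hence `‖p - q‖² = ‖p‖² - ‖q‖²`,
which is nonnegative and vanishes exactly when `p = q`.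
-/

open scoped RealInnerProductSpace

section InnerProductSpace

variable {E : Type*} [NormedAddCommGroup E] [InnerProductSpace ℝ E] {p q : E}

theorem norm_sub_sq_of_inner_eq_norm_sq (h : ⟪p, q⟫ = ‖q‖ ^ 2) :
    ‖p - q‖ ^ 2 = ‖p‖ ^ 2 - ‖q‖ ^ 2 := by
  rw [norm_sub_sq_real, h]
  ring

theorem norm_le_of_inner_eq_norm_sq (h : ⟪p, q⟫ = ‖q‖ ^ 2) : ‖q‖ ≤ ‖p‖ := by
  have hsq : ‖q‖ ^ 2 ≤ ‖p‖ ^ 2 := by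
    linarith [sq_nonneg ‖p - q‖, norm_sub_sq_of_inner_eq_norm_sq h]
  exact (pow_le_pow_iff_left₀ (norm_nonneg q) (norm_nonneg p) two_ne_zero).mp hsq

theorem eq_of_inner_eq_norm_sq_of_norm_eq (h : ⟪p, q⟫ = ‖q‖ ^ 2) (hpq : ‖p‖ = ‖q‖) : p = q := by
  have hsq : ‖p - q‖ ^ 2 = 0 := by rw [norm_sub_sq_of_inner_eq_norm_sq h, hpq, sub_self]
  exact sub_eq_zero.mp (norm_eq_zero.mp (pow_eq_zero_iff two_ne_zero |>.mp hsq))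

end InnerProductSpace

theorem inner_eq_of_mem_subdiff {H : Type*} [NormedAddCommGroup H] [InnerProductSpace ℝ H]
    {J : H → EReal} {u p q : H} (hp : p ∈ subdiff J u) (hq : q ∈ subdiff J u) :
    ⟪p, u⟫ = ⟪q, u⟫ :=
  EReal.coe_injective (hp.2.trans hq.2.symm)

theorem inner_smul_eq_norm_sq_of_mem_subdiff {H : Type*} [NormedAddCommGroup H]
    [InnerProductSpace ℝ H] {J : H → EReal} {u p : H} {l : ℝ}
    (heig : l • u ∈ subdiff J u) (hp : p ∈ subdiff J u) :
    ⟪p, l • u⟫ = ‖l • u‖ ^ 2 := by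
  rw [real_inner_smul_right, inner_eq_of_mem_subdiff hp heig, ← real_inner_smul_right,
    real_inner_self_eq_norm_sq]

theorem eigenvector_minimal_norm_subgradient_general {H : Type*} [NormedAddCommGroup H]
    [InnerProductSpace ℝ H]
    (J : H → EReal)
    (u : H) (l : ℝ) (heig : l • u ∈ subdiff J u) :
    ∀ p ∈ subdiff J u, ‖l • u‖ ≤ ‖p‖ ∧ (‖p‖ = ‖l • u‖ → p = l • u) := by
  intro p hp
  have h := inner_smul_eq_norm_sq_of_mem_subdiff heig hp
  exact ⟨norm_le_of_inner_eq_norm_sq h, eq_of_inner_eq_norm_sq_of_norm_eq h⟩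

theorem eigenvector_minimal_norm_subgradient {H : Type*} [NormedAddCommGroup H]
    [InnerProductSpace ℝ H] [CompleteSpace H]
    (J : H → EReal) (hJ : IsAbsOneHom J)
    (u : H) (l : ℝ) (hl : 0 ≤ l) (heig : l • u ∈ subdiff J u) :
    ∀ p ∈ subdiff J u, ‖l • u‖ ≤ ‖p‖ ∧ (‖p‖ = ‖l • u‖ → p = l • u) :=
  eigenvector_minimal_norm_subgradient_general J u l heig
end

section
/- Let J be an absolutely one-homogeneous convex lsc functional on a real Hilbert space H, with K = ∂J(0). If p is a point of maximal norm in K (i.e., ‖p‖ ≥ ‖q‖ for all q ∈ K), then p ∈ ∂J(p), i.e., p is an eigenvector with eigenvalue 1. -/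
open scoped RealInnerProductSpace

theorem real_inner_le_real_inner_self_of_norm_le {H : Type*} [SeminormedAddCommGroup H]
    [InnerProductSpace ℝ H] {p q : H} (h : ‖q‖ ≤ ‖p‖) : ⟪q, p⟫ ≤ ⟪p, p⟫ :=
  calc ⟪q, p⟫ ≤ ‖q‖ * ‖p‖ := real_inner_le_norm q p
    _ ≤ ‖p‖ * ‖p‖ := mul_le_mul_of_nonneg_right h (norm_nonneg p)
    _ = ⟪p, p⟫ := (real_inner_self_eq_norm_mul_norm p).symm

theorem sSup_real_inner_image_eq_of_norm_le {H : Type*} [SeminormedAddCommGroup H]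
    [InnerProductSpace ℝ H] {K : Set H} {p : H} (hp : p ∈ K) (hmax : ∀ q ∈ K, ‖q‖ ≤ ‖p‖) :
    sSup ((fun q : H => ((⟪q, p⟫ : ℝ) : EReal)) '' K) = ⟪p, p⟫ := by
  refine le_antisymm (sSup_le ?_) (le_sSup (Set.mem_image_of_mem _ hp))
  rintro _ ⟨q, hq, rfl⟩
  exact EReal.coe_le_coe (real_inner_le_real_inner_self_of_norm_le (hmax q hq))

theorem maximal_norm_is_eigenvector_general {H : Type*} [NormedAddCommGroup H]
    [InnerProductSpace ℝ H]
    (J : H → EReal) (K : Set H)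
    (hJK : ∀ u : H, J u = sSup ((fun p : H => ((inner ℝ p u : ℝ) : EReal)) '' K))
    (p : H) (hp : p ∈ K) (hmax : ∀ q ∈ K, ‖q‖ ≤ ‖p‖) :
    p ∈ subdiff J p := by
  refine ⟨fun v => ?_, ?_⟩
  · rw [hJK v]
    exact le_sSup (Set.mem_image_of_mem _ hp)
  · rw [hJK p, sSup_real_inner_image_eq_of_norm_le hp hmax]

theorem maximal_norm_is_eigenvector {H : Type*} [NormedAddCommGroup H]
    [InnerProductSpace ℝ H] [CompleteSpace H]
    (J : H → EReal) (hJ : IsAbsOneHom J) (K : Set H)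
    (hK : K = {r : H | ∀ v : H, ((inner ℝ r v : ℝ) : EReal) ≤ J v})
    (hJK : ∀ u : H, J u = sSup ((fun p : H => ((inner ℝ p u : ℝ) : EReal)) '' K))
    (p : H) (hp : p ∈ K) (hmax : ∀ q ∈ K, ‖q‖ ≤ ‖p‖) :
    p ∈ subdiff J p :=
  maximal_norm_is_eigenvector_general J K hJK p hp hmax
end

section
/- Let J be an absolutely one-homogeneous convex lsc functional on a real Hilbert space H, let u ∈ dom(∂J), and let p be the element of minimal norm in the closed convex set ∂J(u). If p ∈ ∂J(p) (p is an eigenvector with eigenvalue 1), then ⟨p, p - q⟩ = 0 for all q ∈ ∂J(u); equivalently, ∂J(u) ⊂ ∂J(p). -/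
/-
Since `∂J(u)` is convex and `p` is its element of minimal norm, `⟨p, q - p⟩ ≥ 0` for every
`q ∈ ∂J(u)` (the variational characterisation of the projection of `0`). On the other hand,
`p ∈ ∂J(p)` gives `⟨q, p⟩ ≤ J(p) = ⟨p, p⟩`. Hence `⟨p, p - q⟩ = 0`, i.e. `⟨q, p⟩ = J(p)`,
which is exactly the missing condition for `q ∈ ∂J(p)`.
-/

open scoped RealInnerProductSpace

section Convexity

variable {E : Type*} [AddCommGroup E] [Module ℝ E] {f : E → ℝ}

theorem convex_setOf_coe_le (hf : IsLinearMap ℝ f) (c : EReal) :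
    Convex ℝ {x | (f x : EReal) ≤ c} := by
  induction c using EReal.rec with
  | bot => simpa using convex_empty
  | coe r => simpa only [EReal.coe_le_coe_iff] using convex_halfSpace_le hf r
  | top => simpa using convex_univ

theorem convex_setOf_coe_eq (hf : IsLinearMap ℝ f) (c : EReal) :
    Convex ℝ {x | (f x : EReal) = c} := by
  induction c using EReal.rec with
  | bot => simpa using convex_empty
  | coe r => simpa only [EReal.coe_eq_coe_iff] using convex_hyperplane hf r
  | top => simpa using convex_empty

end Convexity

section InnerProductSpace

variable {H : Type*} [NormedAddCommGroup H] [InnerProductSpace ℝ H]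

theorem isLinearMap_inner_left (v : H) : IsLinearMap ℝ fun p : H => ⟪p, v⟫ :=
  ⟨fun x y => inner_add_left x y v, fun c x => real_inner_smul_left x v c⟩

theorem subdiff_eq_iInter_inter (J : H → EReal) (u : H) :
    subdiff J u = (⋂ v, {p | (⟪p, v⟫ : EReal) ≤ J v}) ∩ {p | (⟪p, u⟫ : EReal) = J u} := by
  ext p
  simp only [subdiff, Set.mem_ofPred_eq, Set.mem_inter_iff, Set.mem_iInter]

theorem convex_subdiff (J : H → EReal) (u : H) : Convex ℝ (subdiff J u) := by
  rw [subdiff_eq_iInter_inter]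
  exact (convex_iInter fun v => convex_setOf_coe_le (isLinearMap_inner_left v) (J v)).inter
    (convex_setOf_coe_eq (isLinearMap_inner_left u) (J u))

theorem real_inner_sub_nonneg_of_forall_norm_le {K : Set H} (hK : Convex ℝ K) {p : H}
    (hp : p ∈ K) (hmin : ∀ q ∈ K, ‖p‖ ≤ ‖q‖) {q : H} (hq : q ∈ K) : 0 ≤ ⟪p, q - p⟫ := by
  have hinf : ‖0 - p‖ = ⨅ w : K, ‖0 - (w : H)‖ := by
    simp only [zero_sub, norm_neg]
    have : Nonempty K := ⟨⟨p, hp⟩⟩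
    have hbdd : BddBelow (Set.range fun w : K => ‖(w : H)‖) :=
      ⟨0, Set.forall_mem_range.2 fun _ => norm_nonneg _⟩
    exact le_antisymm (le_ciInf fun w => hmin w w.2) (ciInf_le hbdd ⟨p, hp⟩)
  have := (norm_eq_iInf_iff_real_inner_le_zero hK hp).1 hinf q hq
  rwa [zero_sub, inner_neg_left, neg_nonpos] at this

end InnerProductSpace

theorem minsub_of_minimal_norm_eigenvector_general {H : Type*} [NormedAddCommGroup H]
    [InnerProductSpace ℝ H]
    (J : H → EReal)
    (u p : H) (hp : p ∈ subdiff J u)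
    (hmin : ∀ q ∈ subdiff J u, ‖p‖ ≤ ‖q‖)
    (heig : p ∈ subdiff J p) :
    (∀ q ∈ subdiff J u, (inner ℝ p (p - q) : ℝ) = 0) ∧ subdiff J u ⊆ subdiff J p := by
  have orthogonal : ∀ q ∈ subdiff J u, ⟪p, p - q⟫ = 0 := by
    intro q hq
    have lower := real_inner_sub_nonneg_of_forall_norm_le (convex_subdiff J u) hp hmin hq
    have upper : ⟪q, p⟫ ≤ ⟪p, p⟫ :=
      EReal.coe_le_coe_iff.1 ((hq.1 p).trans_eq heig.2.symm)
    rw [inner_sub_right] at lower ⊢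
    rw [real_inner_comm] at upper
    linarith
  refine ⟨orthogonal, fun q hq => ⟨hq.1, ?_⟩⟩
  have hqp : ⟪p, p⟫ = ⟪q, p⟫ := by
    rw [real_inner_comm p q, ← sub_eq_zero, ← inner_sub_right, orthogonal q hq]
  rw [← hqp]
  exact heig.2

theorem minsub_of_minimal_norm_eigenvector {H : Type*} [NormedAddCommGroup H]
    [InnerProductSpace ℝ H] [CompleteSpace H]
    (J : H → EReal) (hJ : IsAbsOneHom J)
    (u p : H) (hp : p ∈ subdiff J u)
    (hmin : ∀ q ∈ subdiff J u, ‖p‖ ≤ ‖q‖)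
    (heig : p ∈ subdiff J p) :
    (∀ q ∈ subdiff J u, (inner ℝ p (p - q) : ℝ) = 0) ∧ subdiff J u ⊆ subdiff J p :=
  minsub_of_minimal_norm_eigenvector_general J u p hp hmin heig
end

section
/- Let K ⊂ ℝⁿ be a convex polyhedron with K = -K, defining J(u) = sup_{q∈K}⟨q,u⟩. Suppose that for every u ∈ ℝⁿ the element p of minimal norm in ∂J(u) satisfies the MINSUB condition ⟨p, p - q⟩ = 0 for all q ∈ ∂J(u). Then every such minimal-norm subgradient p satisfies p ∈ ∂J(p), i.e., it is an eigenvector with eigenvalue 1. -/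
/-- Subdifferential of `J(u) = sup_{q ∈ K} ⟨q,u⟩` at `u`:
`∂J(u) = {q ∈ K : ⟨q,u⟩ = J(u)}`. -/
def polySubdiff {n : ℕ} (K : Set (EuclideanSpace ℝ (Fin n)))
    (J : EuclideanSpace ℝ (Fin n) → ℝ) (u : EuclideanSpace ℝ (Fin n)) :
    Set (EuclideanSpace ℝ (Fin n)) :=
  {q : EuclideanSpace ℝ (Fin n) | q ∈ K ∧ (inner ℝ q u : ℝ) = J u}

/-!
Let `p` be the minimal-norm subgradient at `u` and suppose some vertex `b` of `K` has
`⟪b, p⟫ > ⟪p, p⟫`. Moving `u` along `p` to `x = u + t p`, the face `∂J(x)` keeps `p`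
until, at the first critical time `t ≥ 0`, a vertex `w` with `⟪w, p⟫ > ⟪p, p⟫` joins it.
Every `r ∈ ∂J(x)` then has `⟪r, p⟫ ≥ ⟪p, p⟫`, so `p` is still the minimal-norm element of
`∂J(x)`, and MINSUB at `x` with `q = w` forces `⟪p, w⟫ = ⟪p, p⟫`, a contradiction.
-/

open scoped RealInnerProductSpace

theorem Finset.exists_max_mul_le {ι : Type*} (s : Finset ι) (a c : ι → ℝ)
    (ha : ∀ i ∈ s, 0 ≤ a i) (hc : ∃ i ∈ s, 0 < c i) :
    ∃ t, 0 ≤ t ∧ ∃ j ∈ s, 0 < c j ∧ t * c j = a j ∧ ∀ i ∈ s, t * c i ≤ a i := by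
  obtain ⟨j, hj, hj_min⟩ := (s.filter (0 < c ·)).exists_min_image (fun i => a i / c i)
    (by simpa [Finset.Nonempty] using hc)
  obtain ⟨hjs, hcj⟩ := Finset.mem_filter.mp hj
  refine ⟨a j / c j, div_nonneg (ha j hjs) hcj.le, j, hjs, hcj,
    div_mul_cancel₀ _ hcj.ne', fun i hi => ?_⟩
  rcases lt_or_ge 0 (c i) with hci | hci
  · exact (le_div_iff₀ hci).mp (hj_min i (Finset.mem_filter.mpr ⟨hi, hci⟩))
  · exact (mul_nonpos_of_nonneg_of_nonpos (div_nonneg (ha j hjs) hcj.le) hci).trans (ha i hi)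

section InnerProductSpace

variable {E : Type*} [NormedAddCommGroup E] [InnerProductSpace ℝ E]

theorem norm_le_of_inner_self_le_inner {p r : E} (h : ⟪p, p⟫ ≤ ⟪r, p⟫) : ‖p‖ ≤ ‖r‖ := by
  have hrp := real_inner_le_norm r p
  rw [real_inner_self_eq_norm_mul_norm] at h
  rcases (norm_nonneg p).eq_or_lt with hp | hp
  · rw [← hp]
    exact norm_nonneg r
  · nlinarith

theorem inner_le_of_mem_convexHull {s : Set E} {x q : E} {c : ℝ}
    (hs : ∀ v ∈ s, ⟪v, x⟫ ≤ c) (hq : q ∈ convexHull ℝ s) : ⟪q, x⟫ ≤ c :=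
  convexHull_min hs (convex_halfSpace_le ((innerₛₗ ℝ).flip x |>.isLinear) c) hq

theorem bddAbove_inner_image_convexHull (s : Finset E) (x : E) :
    BddAbove ((fun q => ⟪q, x⟫) '' convexHull ℝ (s : Set E)) :=
  (s.finite_toSet.isCompact_convexHull (𝕜 := ℝ)).bddAbove_image (by fun_prop)

end InnerProductSpace

section polySubdiff

variable {n : ℕ} {J : EuclideanSpace ℝ (Fin n) → ℝ}

theorem mem_polySubdiff_iff {K : Set (EuclideanSpace ℝ (Fin n))}
    (hK : ∀ x, BddAbove ((fun q => ⟪q, x⟫) '' K))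
    (hJ : ∀ u, J u = sSup ((fun q : EuclideanSpace ℝ (Fin n) => ⟪q, u⟫) '' K))
    {x p : EuclideanSpace ℝ (Fin n)} :
    p ∈ polySubdiff K J x ↔ p ∈ K ∧ ∀ q ∈ K, ⟪q, x⟫ ≤ ⟪p, x⟫ := by
  refine ⟨fun ⟨hpK, hpx⟩ => ⟨hpK, fun q hq => ?_⟩, fun ⟨hpK, hmax⟩ => ⟨hpK, ?_⟩⟩
  · rw [hpx, hJ]
    exact le_csSup (hK x) ⟨q, hq, rfl⟩
  · rw [hJ]
    have : IsGreatest ((fun q => ⟪q, x⟫) '' K) ⟪p, x⟫ :=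
      ⟨Set.mem_image_of_mem _ hpK, Set.forall_mem_image.mpr hmax⟩
    exact this.csSup_eq.symm

theorem mem_polySubdiff_convexHull_iff {S : Finset (EuclideanSpace ℝ (Fin n))}
    (hJ : ∀ u, J u = sSup ((fun q : EuclideanSpace ℝ (Fin n) => ⟪q, u⟫) ''
      convexHull ℝ (S : Set (EuclideanSpace ℝ (Fin n)))))
    {x p : EuclideanSpace ℝ (Fin n)} :
    p ∈ polySubdiff (convexHull ℝ (S : Set (EuclideanSpace ℝ (Fin n)))) J x ↔
      p ∈ convexHull ℝ (S : Set (EuclideanSpace ℝ (Fin n))) ∧ ∀ v ∈ S, ⟪v, x⟫ ≤ ⟪p, x⟫ := by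
  rw [mem_polySubdiff_iff (bddAbove_inner_image_convexHull S) hJ]
  exact and_congr_right fun _ =>
    ⟨fun h v hv => h v (subset_convexHull ℝ _ hv), fun h _ => inner_le_of_mem_convexHull h⟩

theorem norm_le_of_mem_polySubdiff_add_smul {K : Set (EuclideanSpace ℝ (Fin n))}
    (hK : ∀ x, BddAbove ((fun q => ⟪q, x⟫) '' K))
    (hJ : ∀ u, J u = sSup ((fun q : EuclideanSpace ℝ (Fin n) => ⟪q, u⟫) '' K))
    {u p r : EuclideanSpace ℝ (Fin n)} {t : ℝ} (hp : p ∈ polySubdiff K J u)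
    (hpmin : ∀ r ∈ polySubdiff K J u, ‖p‖ ≤ ‖r‖) (ht : 0 ≤ t)
    (hpx : p ∈ polySubdiff K J (u + t • p)) (hr : r ∈ polySubdiff K J (u + t • p)) :
    ‖p‖ ≤ ‖r‖ := by
  rcases ht.eq_or_lt with rfl | ht
  · simp only [zero_smul, add_zero] at hr
    exact hpmin r hr
  have hrx : ⟪r, u + t • p⟫ = ⟪p, u + t • p⟫ := hr.2.trans hpx.2.symm
  have hru : ⟪r, u⟫ ≤ ⟪p, u⟫ := ((mem_polySubdiff_iff hK hJ).mp hp).2 r hr.1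
  simp only [inner_add_right, real_inner_smul_right] at hrx
  exact norm_le_of_inner_self_le_inner (le_of_mul_le_mul_left (by linarith) ht)

end polySubdiff

theorem polyhedral_minsub_implies_eigenvector_general {n : ℕ}
    (K : Set (EuclideanSpace ℝ (Fin n)))
    (hpoly : ∃ S : Finset (EuclideanSpace ℝ (Fin n)), K = convexHull ℝ (S : Set (EuclideanSpace ℝ (Fin n))))
    (J : EuclideanSpace ℝ (Fin n) → ℝ)
    (hJ : ∀ u, J u = sSup ((fun q : EuclideanSpace ℝ (Fin n) => (inner ℝ q u : ℝ)) '' K))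
    (hminsub : ∀ u p, p ∈ polySubdiff K J u → (∀ r ∈ polySubdiff K J u, ‖p‖ ≤ ‖r‖) →
      ∀ q ∈ polySubdiff K J u, (inner ℝ p (p - q) : ℝ) = 0) :
    ∀ u p, p ∈ polySubdiff K J u → (∀ r ∈ polySubdiff K J u, ‖p‖ ≤ ‖r‖) →
      p ∈ polySubdiff K J p := by
  intro u p hp hpmin
  obtain ⟨S, rfl⟩ := hpoly
  obtain ⟨hpK, hpu⟩ := (mem_polySubdiff_convexHull_iff hJ).mp hp
  refine (mem_polySubdiff_convexHull_iff hJ).mpr ⟨hpK, fun v hv => ?_⟩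
  by_contra! hbad
  obtain ⟨t, ht, w, hwS, hwp, hw_tie, hmax⟩ := S.exists_max_mul_le
    (fun v => ⟪p, u⟫ - ⟪v, u⟫) (fun v => ⟪v, p⟫ - ⟪p, p⟫)
    (fun v hv => sub_nonneg.mpr (hpu v hv)) ⟨v, hv, sub_pos.mpr hbad⟩
  have hinner (q : EuclideanSpace ℝ (Fin n)) : ⟪q, u + t • p⟫ = ⟪q, u⟫ + t * ⟪q, p⟫ := by
    rw [inner_add_right, real_inner_smul_right]
  have hpx : p ∈ polySubdiff _ J (u + t • p) :=
    (mem_polySubdiff_convexHull_iff hJ).mpr ⟨hpK, fun v hv => by have := hmax v hv; simp only [hinner]; linarith⟩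
  have hwx : w ∈ polySubdiff _ J (u + t • p) :=
    ⟨subset_convexHull ℝ _ hwS, by rw [← hpx.2, hinner, hinner]; linarith⟩
  have hpmin_x : ∀ r ∈ polySubdiff _ J (u + t • p), ‖p‖ ≤ ‖r‖ := fun r hr =>
    norm_le_of_mem_polySubdiff_add_smul (bddAbove_inner_image_convexHull S) hJ hp hpmin ht hpx hr
  have := hminsub _ p hpx hpmin_x w hwx
  rw [inner_sub_right, real_inner_comm w p] at this
  linarith

theorem polyhedral_minsub_implies_eigenvector {n : ℕ}
    (K : Set (EuclideanSpace ℝ (Fin n)))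
    (hpoly : ∃ S : Finset (EuclideanSpace ℝ (Fin n)), K = convexHull ℝ (S : Set (EuclideanSpace ℝ (Fin n))))
    (hsym : K = -K)
    (J : EuclideanSpace ℝ (Fin n) → ℝ)
    (hJ : ∀ u, J u = sSup ((fun q : EuclideanSpace ℝ (Fin n) => (inner ℝ q u : ℝ)) '' K))
    (hminsub : ∀ u p, p ∈ polySubdiff K J u → (∀ r ∈ polySubdiff K J u, ‖p‖ ≤ ‖r‖) →
      ∀ q ∈ polySubdiff K J u, (inner ℝ p (p - q) : ℝ) = 0) :
    ∀ u p, p ∈ polySubdiff K J u → (∀ r ∈ polySubdiff K J u, ‖p‖ ≤ ‖r‖) →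
      p ∈ polySubdiff K J p :=
  polyhedral_minsub_implies_eigenvector_general K hpoly J hJ hminsub
end
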